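/- arXiv:2212.06748 — 2 statements merged into one kernel-verified Lean document; each statement's English description precedes it below -/
import Mathlib

section
/- For any two parameter configurations (π, θ, φ) and (π̃, θ̃, φ̃) for which all the quantities below are well defined (in particular ǧ(·; π, θ, φ) and ǧ(·; π̃, θ̃, φ̃) are strictly positive g-a.e. and all integrals are finite), the difference of smoothed log-likelihoods satisfies ℓ(π, θ, φ) − ℓ(π̃, θ̃, φ̃) ≤ Ψ₁(π̃ | π, θ, φ) + Ψ₂(φ̃ | π, θ, φ) + Ψ₃(θ̃, φ̃ | π, θ, φ), where Ψ₁(π̃ | π, θ, φ) = −Σ_{k=1}^K log(π̃_k/π_k) ∫ g(x) w_k(x; π, θ, φ) dx, Ψ₂(φ̃ | π, θ, φ) = −∫ g(x) Σ_{k=1}^K w_k(x; π, θ, φ) log( Π_{j=1}^d N_{h_{kj}} f̃_{kj}(x_j) / Π_{j=1}^d N_{h_{kj}} f_{kj}(x_j) ) dx, and Ψ₃(θ̃, φ̃ | π, θ, φ) = −∫ g(x) Σ_{k=1}^K w_k(x; π, θ, φ) log( c_k(F̃_{k1}(x_1), …, F̃_{kd}(x_d); θ̃_k) / c_k(F_{k1}(x_1),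 …, F_{kd}(x_d); θ_k) ) dx, with F̃_{kj} the CDF of f̃_{kj}. -/
open MeasureTheory Real Filter

noncomputable section

/-- Rescaled kernel `K_h(u) = h⁻¹ K(u/h)`. -/
def Kh (Kker : ℝ → ℝ) (h u : ℝ) : ℝ := h⁻¹ * Kker (u / h)

/-- Nonlinear smoother `N_h f(x) = exp(∫ K_h(x-u) log f(u) du)`. -/
def Nh (Kker : ℝ → ℝ) (h : ℝ) (f : ℝ → ℝ) (x : ℝ) : ℝ :=
  Real.exp (∫ u : ℝ, Kh Kker h (x - u) * Real.log (f u))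

/-- Cumulative distribution function of a density `f`. -/
def cdf (f : ℝ → ℝ) (u : ℝ) : ℝ := ∫ y in Set.Iic u, f y

/-- Copula-based component density
`O f_k(x) = c_k(F_{k1}(x₁),…,F_{kd}(x_d); θ_k) ∏ⱼ N_{h_{kj}} f_{kj}(xⱼ)`. -/
def Ofun {Θ : Type*} {K d : ℕ} (Kker : ℝ → ℝ) (h : Fin K → Fin d → ℝ)
    (c : Fin K → (Fin d → ℝ) → Θ → ℝ) (θ : Fin K → Θ)
    (φ : Fin K → Fin d → ℝ → ℝ) (k : Fin K) (x : Fin d → ℝ) : ℝ :=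
  c k (fun j => cdf (φ k j) (x j)) (θ k) * ∏ j, Nh Kker (h k j) (φ k j) (x j)

/-- Smoothed mixture `ǧ(x; pw, θ, φ) = ∑ₖ pwₖ O fₖ(x; θ, φ)`. -/
def gcheck {Θ : Type*} {K d : ℕ} (Kker : ℝ → ℝ) (h : Fin K → Fin d → ℝ)
    (c : Fin K → (Fin d → ℝ) → Θ → ℝ) (pw : Fin K → ℝ) (θ : Fin K → Θ)
    (φ : Fin K → Fin d → ℝ → ℝ) (x : Fin d → ℝ) : ℝ :=
  ∑ k, pw k * Ofun Kker h c θ φ k x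

/-- Posterior weights `w_k(x; pw, θ, φ)`. -/
def wgt {Θ : Type*} {K d : ℕ} (Kker : ℝ → ℝ) (h : Fin K → Fin d → ℝ)
    (c : Fin K → (Fin d → ℝ) → Θ → ℝ) (pw : Fin K → ℝ) (θ : Fin K → Θ)
    (φ : Fin K → Fin d → ℝ → ℝ) (k : Fin K) (x : Fin d → ℝ) : ℝ :=
  pw k * Ofun Kker h c θ φ k x / gcheck Kker h c pw θ φ x

/-- Smoothed semiparametric log-likelihood `ℓ(pw, θ, φ)`. -/
def ell {Θ : Type*} {K d : ℕ} (g : (Fin d → ℝ) → ℝ) (Kker : ℝ → ℝ)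
    (h : Fin K → Fin d → ℝ) (c : Fin K → (Fin d → ℝ) → Θ → ℝ)
    (pw : Fin K → ℝ) (θ : Fin K → Θ) (φ : Fin K → Fin d → ℝ → ℝ) : ℝ :=
  ∫ x : Fin d → ℝ, g x * Real.log (gcheck Kker h c pw θ φ x / g x)

/-- `Ψ₁(pw̃ | pw, θ, φ)`. -/
def Psi1 {Θ : Type*} {K d : ℕ} (g : (Fin d → ℝ) → ℝ) (Kker : ℝ → ℝ)
    (h : Fin K → Fin d → ℝ) (c : Fin K → (Fin d → ℝ) → Θ → ℝ)
    (pw : Fin K → ℝ) (θ : Fin K → Θ) (φ : Fin K → Fin d → ℝ → ℝ)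
    (pwt : Fin K → ℝ) : ℝ :=
  -∑ k, Real.log (pwt k / pw k) * ∫ x : Fin d → ℝ, g x * wgt Kker h c pw θ φ k x

/-- `Ψ₂(φ̃ | pw, θ, φ)`. -/
def Psi2 {Θ : Type*} {K d : ℕ} (g : (Fin d → ℝ) → ℝ) (Kker : ℝ → ℝ)
    (h : Fin K → Fin d → ℝ) (c : Fin K → (Fin d → ℝ) → Θ → ℝ)
    (pw : Fin K → ℝ) (θ : Fin K → Θ) (φ : Fin K → Fin d → ℝ → ℝ)
    (φt : Fin K → Fin d → ℝ → ℝ) : ℝ :=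
  -∫ x : Fin d → ℝ, g x * ∑ k, wgt Kker h c pw θ φ k x *
    Real.log ((∏ j, Nh Kker (h k j) (φt k j) (x j)) /
      (∏ j, Nh Kker (h k j) (φ k j) (x j)))

/-- `Ψ₃(θ̃, φ̃ | pw, θ, φ)`. -/
def Psi3 {Θ : Type*} {K d : ℕ} (g : (Fin d → ℝ) → ℝ) (Kker : ℝ → ℝ)
    (h : Fin K → Fin d → ℝ) (c : Fin K → (Fin d → ℝ) → Θ → ℝ)
    (pw : Fin K → ℝ) (θ : Fin K → Θ) (φ : Fin K → Fin d → ℝ → ℝ)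
    (θt : Fin K → Θ) (φt : Fin K → Fin d → ℝ → ℝ) : ℝ :=
  -∫ x : Fin d → ℝ, g x * ∑ k, wgt Kker h c pw θ φ k x *
    Real.log (c k (fun j => cdf (φt k j) (x j)) (θt k) /
      c k (fun j => cdf (φ k j) (x j)) (θ k))

/-- Jensen's inequality for the logarithm with self-normalized weights. -/
lemma jensen_log_ratio {K : ℕ} (hK : 0 < K) (a b : Fin K → ℝ)
    (ha : ∀ k, 0 < a k) (hb : ∀ k, 0 < b k) :
    ∑ k, (a k / ∑ i, a i) * Real.log (b k / a k) ≤
      Real.log ((∑ k, b k) / (∑ k, a k)) := by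
  have hne : (Finset.univ : Finset (Fin K)).Nonempty :=
    Finset.univ_nonempty_iff.2 (Fin.pos_iff_nonempty.mp hK)
  have hA : 0 < ∑ i, a i := Finset.sum_pos (fun i _ => ha i) hne
  have hsum : ∑ k, (a k / ∑ i, a i) * (b k / a k) = (∑ k, b k) / (∑ i, a i) := by
    rw [Finset.sum_div]
    refine Finset.sum_congr rfl fun k _ => ?_
    rw [div_mul_div_comm, mul_comm (a k), mul_div_mul_right _ _ (ha k).ne']
  have hjen := strictConcaveOn_log_Ioi.concaveOn.le_map_sum
    (t := Finset.univ) (w := fun k => a k / ∑ i, a i) (p := fun k => b k / a k)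
    (fun i _ => div_nonneg (ha i).le hA.le)
    (by rw [← Finset.sum_div, div_self hA.ne'])
    (fun i _ => div_pos (hb i) (ha i))
  simpa [smul_eq_mul, hsum] using hjen

lemma Ofun_pos {Θ : Type*} {K d : ℕ} (Kker : ℝ → ℝ) (h : Fin K → Fin d → ℝ)
    (c : Fin K → (Fin d → ℝ) → Θ → ℝ) (θ : Fin K → Θ)
    (φ : Fin K → Fin d → ℝ → ℝ) (hcpos : ∀ k u t, 0 < c k u t)
    (k : Fin K) (x : Fin d → ℝ) : 0 < Ofun Kker h c θ φ k x :=
  mul_pos (hcpos _ _ _) (Finset.prod_pos fun _ _ => Real.exp_pos _)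

/-- Lemma 1: the smoothed log-likelihood difference is bounded by
`Ψ₁ + Ψ₂ + Ψ₃`. -/
theorem smoothed_loglik_difference_bound
    {Θ : Type*} {K d : ℕ} (hK : 0 < K) (hd : 0 < d)
    (g : (Fin d → ℝ) → ℝ) (Kker : ℝ → ℝ) (h : Fin K → Fin d → ℝ)
    (c : Fin K → (Fin d → ℝ) → Θ → ℝ)
    (pw : Fin K → ℝ) (θ : Fin K → Θ) (φ : Fin K → Fin d → ℝ → ℝ)
    (pwt : Fin K → ℝ) (θt : Fin K → Θ) (φt : Fin K → Fin d → ℝ → ℝ)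
    -- the target density
    (hg0 : ∀ x, 0 ≤ g x) (hgint : Integrable g) (hgmass : ∫ x : Fin d → ℝ, g x = 1)
    -- the kernel is a probability density, and bandwidths are positive
    (hker0 : ∀ u, 0 ≤ Kker u) (hker1 : ∫ u : ℝ, Kker u = 1)
    (hh : ∀ k j, 0 < h k j)
    -- the marginals are strictly positive probability densities
    (hφpos : ∀ k j u, 0 < φ k j u) (hφint : ∀ k j, Integrable (φ k j))
    (hφmass : ∀ k j, ∫ u : ℝ, φ k j u = 1)
    (hφtpos : ∀ k j u, 0 < φt k j u) (hφtint : ∀ k j, Integrable (φt k j))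
    (hφtmass : ∀ k j, ∫ u : ℝ, φt k j u = 1)
    -- the copula densities are strictly positive
    (hcpos : ∀ k u t, 0 < c k u t)
    -- the mixture weights
    (hpw : ∀ k, 0 < pw k) (hpwsum : ∑ k, pw k = 1)
    (hpwt : ∀ k, 0 < pwt k) (hpwtsum : ∑ k, pwt k = 1)
    -- well-definedness: `ǧ` strictly positive `g`-a.e.
    (hgc : ∀ᵐ x : Fin d → ℝ, g x ≠ 0 → 0 < gcheck Kker h c pw θ φ x)
    (hgct : ∀ᵐ x : Fin d → ℝ, g x ≠ 0 → 0 < gcheck Kker h c pwt θt φt x)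
    -- all the integrals below are finite
    (hint1 : Integrable (fun x : Fin d → ℝ =>
      g x * Real.log (gcheck Kker h c pw θ φ x / g x)))
    (hint2 : Integrable (fun x : Fin d → ℝ =>
      g x * Real.log (gcheck Kker h c pwt θt φt x / g x)))
    (hint3 : ∀ k, Integrable (fun x : Fin d → ℝ => g x * wgt Kker h c pw θ φ k x))
    (hint4 : Integrable (fun x : Fin d → ℝ =>
      g x * ∑ k, wgt Kker h c pw θ φ k x *
        Real.log ((∏ j, Nh Kker (h k j) (φt k j) (x j)) /
          (∏ j, Nh Kker (h k j) (φ k j) (x j)))))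
    (hint5 : Integrable (fun x : Fin d → ℝ =>
      g x * ∑ k, wgt Kker h c pw θ φ k x *
        Real.log (c k (fun j => cdf (φt k j) (x j)) (θt k) /
          c k (fun j => cdf (φ k j) (x j)) (θ k)))) :
    ell g Kker h c pw θ φ - ell g Kker h c pwt θt φt ≤
      Psi1 g Kker h c pw θ φ pwt + Psi2 g Kker h c pw θ φ φt +
        Psi3 g Kker h c pw θ φ θt φt := by
  -- abbreviations
  set A : (Fin d → ℝ) → ℝ := gcheck Kker h c pw θ φ with hAdef
  set B : (Fin d → ℝ) → ℝ := gcheck Kker h c pwt θt φt with hBdef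
  have hOpos : ∀ k x, 0 < Ofun Kker h c θ φ k x := fun k x =>
    Ofun_pos Kker h c θ φ hcpos k x
  have hOtpos : ∀ k x, 0 < Ofun Kker h c θt φt k x := fun k x =>
    Ofun_pos Kker h c θt φt hcpos k x
  have hne : (Finset.univ : Finset (Fin K)).Nonempty :=
    Finset.univ_nonempty_iff.2 (Fin.pos_iff_nonempty.mp hK)
  have hApos : ∀ x, 0 < A x := fun x =>
    Finset.sum_pos (fun k _ => mul_pos (hpw k) (hOpos k x)) hne
  have hBpos : ∀ x, 0 < B x := fun x =>
    Finset.sum_pos (fun k _ => mul_pos (hpwt k) (hOtpos k x)) hne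
  -- the three penalty terms as single integrals
  have hF1int : Integrable (fun x : Fin d → ℝ =>
      g x * ∑ k, Real.log (pwt k / pw k) * wgt Kker h c pw θ φ k x) := by
    have : (fun x : Fin d → ℝ =>
        g x * ∑ k, Real.log (pwt k / pw k) * wgt Kker h c pw θ φ k x)
        = fun x => ∑ k, Real.log (pwt k / pw k) * (g x * wgt Kker h c pw θ φ k x) := by
      funext x
      rw [Finset.mul_sum]
      exact Finset.sum_congr rfl fun k _ => by ring
    rw [this]
    exact integrable_finset_sum _ fun k _ => (hint3 k).const_mul _
  have hPsi1 : Psi1 g Kker h c pw θ φ pwt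
      = ∫ x : Fin d → ℝ, -(g x * ∑ k, Real.log (pwt k / pw k) * wgt Kker h c pw θ φ k x) := by
    unfold Psi1
    rw [integral_neg]
    congr 1
    calc ∑ k, Real.log (pwt k / pw k) * ∫ x : Fin d → ℝ, g x * wgt Kker h c pw θ φ k x
        = ∑ k, ∫ x : Fin d → ℝ, Real.log (pwt k / pw k) * (g x * wgt Kker h c pw θ φ k x) := by
          refine Finset.sum_congr rfl fun k _ => ?_
          rw [MeasureTheory.integral_const_mul]
      _ = ∫ x : Fin d → ℝ, ∑ k, Real.log (pwt k / pw k) * (g x * wgt Kker h c pw θ φ k x) := by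
          rw [integral_finset_sum _ fun k _ => (hint3 k).const_mul _]
      _ = ∫ x : Fin d → ℝ, g x * ∑ k, Real.log (pwt k / pw k) * wgt Kker h c pw θ φ k x := by
          refine integral_congr_ae (Filter.Eventually.of_forall fun x => ?_)
          simp only [Finset.mul_sum]
          exact Finset.sum_congr rfl fun k _ => by ring
  have hPsi2 : Psi2 g Kker h c pw θ φ φt
      = ∫ x : Fin d → ℝ, -(g x * ∑ k, wgt Kker h c pw θ φ k x *
          Real.log ((∏ j, Nh Kker (h k j) (φt k j) (x j)) /
            (∏ j, Nh Kker (h k j) (φ k j) (x j)))) := by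
    unfold Psi2; rw [integral_neg]
  have hPsi3 : Psi3 g Kker h c pw θ φ θt φt
      = ∫ x : Fin d → ℝ, -(g x * ∑ k, wgt Kker h c pw θ φ k x *
          Real.log (c k (fun j => cdf (φt k j) (x j)) (θt k) /
            c k (fun j => cdf (φ k j) (x j)) (θ k))) := by
    unfold Psi3; rw [integral_neg]
  -- combine RHS into one integral
  have hRHS : Psi1 g Kker h c pw θ φ pwt + Psi2 g Kker h c pw θ φ φt +
        Psi3 g Kker h c pw θ φ θt φt
      = ∫ x : Fin d → ℝ,
          (-(g x * ∑ k, Real.log (pwt k / pw k) * wgt Kker h c pw θ φ k x)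
          + -(g x * ∑ k, wgt Kker h c pw θ φ k x *
              Real.log ((∏ j, Nh Kker (h k j) (φt k j) (x j)) /
                (∏ j, Nh Kker (h k j) (φ k j) (x j))))
          + -(g x * ∑ k, wgt Kker h c pw θ φ k x *
              Real.log (c k (fun j => cdf (φt k j) (x j)) (θt k) /
                (c k (fun j => cdf (φ k j) (x j)) (θ k))))) := by
    have h1 : Integrable (fun x : Fin d → ℝ =>
        -(g x * ∑ k, Real.log (pwt k / pw k) * wgt Kker h c pw θ φ k x)) := hF1int.neg
    have h2 : Integrable (fun x : Fin d → ℝ =>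
        -(g x * ∑ k, wgt Kker h c pw θ φ k x *
          Real.log ((∏ j, Nh Kker (h k j) (φt k j) (x j)) /
            (∏ j, Nh Kker (h k j) (φ k j) (x j))))) := hint4.neg
    have h3 : Integrable (fun x : Fin d → ℝ =>
        -(g x * ∑ k, wgt Kker h c pw θ φ k x *
          Real.log (c k (fun j => cdf (φt k j) (x j)) (θt k) /
            (c k (fun j => cdf (φ k j) (x j)) (θ k))))) := hint5.neg
    have e12 : (∫ x : Fin d → ℝ,
        -(g x * ∑ k, Real.log (pwt k / pw k) * wgt Kker h c pw θ φ k x)) +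
        (∫ x : Fin d → ℝ, -(g x * ∑ k, wgt Kker h c pw θ φ k x *
          Real.log ((∏ j, Nh Kker (h k j) (φt k j) (x j)) /
            (∏ j, Nh Kker (h k j) (φ k j) (x j)))))
        = ∫ x : Fin d → ℝ,
          (-(g x * ∑ k, Real.log (pwt k / pw k) * wgt Kker h c pw θ φ k x)
          + -(g x * ∑ k, wgt Kker h c pw θ φ k x *
              Real.log ((∏ j, Nh Kker (h k j) (φt k j) (x j)) /
                (∏ j, Nh Kker (h k j) (φ k j) (x j))))) := (integral_add h1 h2).symm
    have e123 : (∫ x : Fin d → ℝ,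
          (-(g x * ∑ k, Real.log (pwt k / pw k) * wgt Kker h c pw θ φ k x)
          + -(g x * ∑ k, wgt Kker h c pw θ φ k x *
              Real.log ((∏ j, Nh Kker (h k j) (φt k j) (x j)) /
                (∏ j, Nh Kker (h k j) (φ k j) (x j)))))) +
        (∫ x : Fin d → ℝ, -(g x * ∑ k, wgt Kker h c pw θ φ k x *
          Real.log (c k (fun j => cdf (φt k j) (x j)) (θt k) /
            (c k (fun j => cdf (φ k j) (x j)) (θ k)))))
        = ∫ x : Fin d → ℝ,
          (-(g x * ∑ k, Real.log (pwt k / pw k) * wgt Kker h c pw θ φ k x)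
          + -(g x * ∑ k, wgt Kker h c pw θ φ k x *
              Real.log ((∏ j, Nh Kker (h k j) (φt k j) (x j)) /
                (∏ j, Nh Kker (h k j) (φ k j) (x j))))
          + -(g x * ∑ k, wgt Kker h c pw θ φ k x *
              Real.log (c k (fun j => cdf (φt k j) (x j)) (θt k) /
                (c k (fun j => cdf (φ k j) (x j)) (θ k))))) :=
      (integral_add (h1.add h2) h3).symm
    rw [hPsi1, hPsi2, hPsi3, e12, e123]
  -- LHS as one integral
  have hLHS : ell g Kker h c pw θ φ - ell g Kker h c pwt θt φt
      = ∫ x : Fin d → ℝ, (g x * Real.log (A x / g x) - g x * Real.log (B x / g x)) := by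
    unfold ell
    rw [integral_sub hint1 hint2]
  rw [hLHS, hRHS]
  refine integral_mono (hint1.sub hint2)
    (((hF1int.neg).add hint4.neg).add hint5.neg) fun x => ?_
  -- pointwise inequality
  by_cases hgx : g x = 0
  · simp [hgx]
  have hgpos : 0 < g x := (hg0 x).lt_of_ne (Ne.symm hgx)
  set a : Fin K → ℝ := fun k => pw k * Ofun Kker h c θ φ k x with hadef
  set b : Fin K → ℝ := fun k => pwt k * Ofun Kker h c θt φt k x with hbdef
  have hapos : ∀ k, 0 < a k := fun k => mul_pos (hpw k) (hOpos k x)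
  have hbpos : ∀ k, 0 < b k := fun k => mul_pos (hpwt k) (hOtpos k x)
  have hAx : A x = ∑ k, a k := rfl
  have hBx : B x = ∑ k, b k := rfl
  -- per-component log decomposition
  have hlog : ∀ k, Real.log (pwt k / pw k)
      + Real.log ((∏ j, Nh Kker (h k j) (φt k j) (x j)) /
          (∏ j, Nh Kker (h k j) (φ k j) (x j)))
      + Real.log (c k (fun j => cdf (φt k j) (x j)) (θt k) /
          (c k (fun j => cdf (φ k j) (x j)) (θ k)))
      = Real.log (b k / a k) := by
    intro k
    have hP : (0:ℝ) < ∏ j, Nh Kker (h k j) (φ k j) (x j) :=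
      Finset.prod_pos fun _ _ => Real.exp_pos _
    have hPt : (0:ℝ) < ∏ j, Nh Kker (h k j) (φt k j) (x j) :=
      Finset.prod_pos fun _ _ => Real.exp_pos _
    have hc1 : (0:ℝ) < c k (fun j => cdf (φ k j) (x j)) (θ k) := hcpos _ _ _
    have hc2 : (0:ℝ) < c k (fun j => cdf (φt k j) (x j)) (θt k) := hcpos _ _ _
    have hb' : b k = pwt k * (c k (fun j => cdf (φt k j) (x j)) (θt k) *
        ∏ j, Nh Kker (h k j) (φt k j) (x j)) := rfl
    have ha' : a k = pw k * (c k (fun j => cdf (φ k j) (x j)) (θ k) *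
        ∏ j, Nh Kker (h k j) (φ k j) (x j)) := rfl
    rw [hb', ha',
      Real.log_div (mul_pos (hpwt k) (mul_pos hc2 hPt)).ne'
        (mul_pos (hpw k) (mul_pos hc1 hP)).ne',
      Real.log_div (hpwt k).ne' (hpw k).ne', Real.log_div hPt.ne' hP.ne',
      Real.log_div hc2.ne' hc1.ne',
      Real.log_mul (hpwt k).ne' (mul_pos hc2 hPt).ne', Real.log_mul hc2.ne' hPt.ne',
      Real.log_mul (hpw k).ne' (mul_pos hc1 hP).ne', Real.log_mul hc1.ne' hP.ne']
    ring
  have hwgt : ∀ k, wgt Kker h c pw θ φ k x = a k / ∑ i, a i := fun k => rfl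
  -- Jensen
  have hjen : ∑ k, wgt Kker h c pw θ φ k x * Real.log (b k / a k)
      ≤ Real.log (B x) - Real.log (A x) := by
    have hj := jensen_log_ratio hK a b hapos hbpos
    have hBA : Real.log ((∑ k, b k) / (∑ k, a k)) = Real.log (B x) - Real.log (A x) := by
      rw [hAx, hBx]
      exact Real.log_div (hBpos x).ne' (hApos x).ne'
    rw [← hBA]
    simpa [hwgt] using hj
  have hlog1 : Real.log (A x / g x) = Real.log (A x) - Real.log (g x) :=
    Real.log_div (hApos x).ne' hgx
  have hlog2 : Real.log (B x / g x) = Real.log (B x) - Real.log (g x) :=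
    Real.log_div (hBpos x).ne' hgx
  rw [hlog1, hlog2]
  have hsum : (∑ k, Real.log (pwt k / pw k) * wgt Kker h c pw θ φ k x)
      + (∑ k, wgt Kker h c pw θ φ k x *
          Real.log ((∏ j, Nh Kker (h k j) (φt k j) (x j)) /
            (∏ j, Nh Kker (h k j) (φ k j) (x j))))
      + (∑ k, wgt Kker h c pw θ φ k x *
          Real.log (c k (fun j => cdf (φt k j) (x j)) (θt k) /
            (c k (fun j => cdf (φ k j) (x j)) (θ k))))
      = ∑ k, wgt Kker h c pw θ φ k x * Real.log (b k / a k) := by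
    rw [← Finset.sum_add_distrib, ← Finset.sum_add_distrib]
    refine Finset.sum_congr rfl fun k _ => ?_
    rw [← hlog k]; ring
  have key : Real.log (A x) - Real.log (B x)
      ≤ -(∑ k, wgt Kker h c pw θ φ k x * Real.log (b k / a k)) := by
    linarith [hjen]
  calc g x * (Real.log (A x) - Real.log (g x)) -
        g x * (Real.log (B x) - Real.log (g x))
      = g x * (Real.log (A x) - Real.log (B x)) := by ring
    _ ≤ g x * (-(∑ k, wgt Kker h c pw θ φ k x * Real.log (b k / a k))) :=
        mul_le_mul_of_nonneg_left key hgpos.le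
    _ = -(g x * ∑ k, Real.log (pwt k / pw k) * wgt Kker h c pw θ φ k x)
        + -(g x * ∑ k, wgt Kker h c pw θ φ k x *
            Real.log ((∏ j, Nh Kker (h k j) (φt k j) (x j)) /
              (∏ j, Nh Kker (h k j) (φ k j) (x j))))
        + -(g x * ∑ k, wgt Kker h c pw θ φ k x *
            Real.log (c k (fun j => cdf (φt k j) (x j)) (θt k) /
              (c k (fun j => cdf (φ k j) (x j)) (θ k)))) := by
        rw [← hsum]; ring
end
end

section
/- (Proposition 1.) Fix the weights π and the marginal densities φ, and suppose that for every θ ∈ Θ^K the quantities ℓ(π, θ, φ) and Ψ₃(θ̃, φ | π, θ, φ) are well defined and finite, where Ψ₃(θ̃, φ | π, θ, φ) = −∫ g(x) Σ_{k=1}^K w_k(x; π, θ, φ) log( c_k(F_{k1}(x₁),…,F_{kd}(x_d); θ̃_k) / c_k(F_{k1}(x₁),…,F_{kd}(x_d); θ_k) ) dx. Let θ⁰ ∈ Θ^K be arbitrary and for t = 1, 2, … let θ^t be a minimizer over Θ^K of θ̃ ↦ Ψ₃(θ̃, φ | π, θ^{t−1}, φ) (assumed to exist). Then the iteration is monotonic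 with respect to the smoothed log-likelihood: ℓ(π, θ^{t−1}, φ) − ℓ(π, θ^t, φ) ≤ 0 for every t = 1, 2, …. -/
open MeasureTheory Real Filter

noncomputable section

/-- Proposition 1: with fixed weights and marginals, the iteration
`θ^t = argmin_θ Ψ₃(θ, φ | π, θ^{t−1}, φ)` is monotonic with respect to the
smoothed log-likelihood. -/
theorem copula_iteration_monotonic
    {Θ : Type*} {K d : ℕ} (hK : 0 < K) (hd : 0 < d)
    (g : (Fin d → ℝ) → ℝ) (Kker : ℝ → ℝ) (h : Fin K → Fin d → ℝ)
    (c : Fin K → (Fin d → ℝ) → Θ → ℝ)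
    (pw : Fin K → ℝ) (φ : Fin K → Fin d → ℝ → ℝ)
    -- the target density
    (hg0 : ∀ x, 0 ≤ g x) (hgint : Integrable g) (hgmass : ∫ x : Fin d → ℝ, g x = 1)
    -- the kernel is a probability density, and bandwidths are positive
    (hker0 : ∀ u, 0 ≤ Kker u) (hker1 : ∫ u : ℝ, Kker u = 1)
    (hh : ∀ k j, 0 < h k j)
    -- the marginals are strictly positive probability densities
    (hφpos : ∀ k j u, 0 < φ k j u) (hφint : ∀ k j, Integrable (φ k j))
    (hφmass : ∀ k j, ∫ u : ℝ, φ k j u = 1)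
    -- the copula densities are strictly positive
    (hcpos : ∀ k u t, 0 < c k u t)
    -- the mixture weights
    (hpw : ∀ k, 0 < pw k) (hpwsum : ∑ k, pw k = 1)
    -- well-definedness and finiteness of `ℓ(π, θ, φ)` for every `θ`
    (hell : ∀ θ' : Fin K → Θ, Integrable (fun x : Fin d → ℝ =>
      g x * Real.log (gcheck Kker h c pw θ' φ x / g x)))
    -- well-definedness and finiteness of `Ψ₃(θ̃, φ | π, θ, φ)` for all `θ, θ̃`
    (hpsi3 : ∀ θ' θt : Fin K → Θ, Integrable (fun x : Fin d → ℝ =>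
      g x * ∑ k, wgt Kker h c pw θ' φ k x *
        Real.log (c k (fun j => cdf (φ k j) (x j)) (θt k) /
          c k (fun j => cdf (φ k j) (x j)) (θ' k))))
    -- the iterates: `θ^t` minimizes `θ̃ ↦ Ψ₃(θ̃, φ | π, θ^{t−1}, φ)`
    (θseq : ℕ → Fin K → Θ)
    (hmin : ∀ t : ℕ, ∀ θt : Fin K → Θ,
      Psi3 g Kker h c pw (θseq t) φ (θseq (t + 1)) φ ≤
        Psi3 g Kker h c pw (θseq t) φ θt φ) :
    ∀ t : ℕ, ell g Kker h c pw (θseq t) φ - ell g Kker h c pw (θseq (t + 1)) φ ≤ 0 := by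

  intro t
  set θ0 := θseq t with hθ0
  set θ1 := θseq (t + 1) with hθ1
  -- positivity facts
  have hNh : ∀ k j (x : ℝ), 0 < Nh Kker (h k j) (φ k j) x := fun k j x => Real.exp_pos _
  have hO : ∀ (θ' : Fin K → Θ) k x, 0 < Ofun Kker h c θ' φ k x := by
    intro θ' k x
    exact mul_pos (hcpos _ _ _) (Finset.prod_pos fun j _ => hNh k j (x j))
  have hG : ∀ (θ' : Fin K → Θ) x, 0 < gcheck Kker h c pw θ' φ x := by
    intro θ' x
    refine Finset.sum_pos (fun k _ => mul_pos (hpw k) (hO θ' k x)) ?_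
    exact Finset.univ_nonempty_iff.mpr ⟨⟨0, hK⟩⟩
  -- Psi3 at (θ0, θ0) is zero
  have h30 : Psi3 g Kker h c pw θ0 φ θ0 φ = 0 := by
    unfold Psi3
    have : ∀ x : Fin d → ℝ, (g x * ∑ k, wgt Kker h c pw θ0 φ k x *
        Real.log (c k (fun j => cdf (φ k j) (x j)) (θ0 k) /
          c k (fun j => cdf (φ k j) (x j)) (θ0 k))) = 0 := by
      intro x
      have : ∀ k : Fin K, Real.log (c k (fun j => cdf (φ k j) (x j)) (θ0 k) /
          c k (fun j => cdf (φ k j) (x j)) (θ0 k)) = 0 := by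
        intro k
        rw [div_self (hcpos _ _ _).ne', Real.log_one]
      simp [this]
    simp only [this, integral_zero, neg_zero]
  have hA : (0:ℝ) ≤ -Psi3 g Kker h c pw θ0 φ θ1 φ := by
    have := hmin t θ0
    rw [← hθ0, ← hθ1] at this
    linarith [h30]
  -- the comparison integrand
  set F : (Fin d → ℝ) → ℝ := fun x =>
    g x * Real.log (gcheck Kker h c pw θ1 φ x / g x) -
      g x * Real.log (gcheck Kker h c pw θ0 φ x / g x) with hF
  have hFint : Integrable F := (hell θ1).sub (hell θ0)
  have hFeq : ∫ x, F x = ell g Kker h c pw θ1 φ - ell g Kker h c pw θ0 φ := by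
    rw [hF]
    exact integral_sub (hell θ1) (hell θ0)
  -- pointwise Jensen inequality
  have hpt : ∀ x : Fin d → ℝ,
      (g x * ∑ k, wgt Kker h c pw θ0 φ k x *
        Real.log (c k (fun j => cdf (φ k j) (x j)) (θ1 k) /
          c k (fun j => cdf (φ k j) (x j)) (θ0 k))) ≤ F x := by
    intro x
    rcases eq_or_lt_of_le (hg0 x) with hgx | hgx
    · simp [hF, ← hgx]
    · have hG0 := hG θ0 x
      have hG1 := hG θ1 x
      have hFx : F x = g x * Real.log (gcheck Kker h c pw θ1 φ x / gcheck Kker h c pw θ0 φ x) := by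
        have hFx0 : F x = g x * Real.log (gcheck Kker h c pw θ1 φ x / g x) -
            g x * Real.log (gcheck Kker h c pw θ0 φ x / g x) := rfl
        rw [hFx0, Real.log_div hG1.ne' hgx.ne', Real.log_div hG0.ne' hgx.ne',
          Real.log_div hG1.ne' hG0.ne']
        ring
      rw [hFx]
      refine mul_le_mul_of_nonneg_left ?_ hgx.le
      -- Jensen
      set w : Fin K → ℝ := fun k => wgt Kker h c pw θ0 φ k x with hw
      set a : Fin K → ℝ := fun k => c k (fun j => cdf (φ k j) (x j)) (θ1 k) /
          c k (fun j => cdf (φ k j) (x j)) (θ0 k) with ha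
      have hw0 : ∀ k ∈ Finset.univ, (0:ℝ) ≤ w k := fun k _ =>
        div_nonneg (mul_pos (hpw k) (hO θ0 k x)).le (hG θ0 x).le
      have hw1 : ∑ k, w k = 1 := by
        rw [hw]
        unfold wgt
        rw [← Finset.sum_div]
        exact div_self (hG θ0 x).ne'
      have hmem : ∀ k ∈ Finset.univ, a k ∈ Set.Ioi (0:ℝ) := fun k _ =>
        div_pos (hcpos _ _ _) (hcpos _ _ _)
      have hjensen := strictConcaveOn_log_Ioi.concaveOn.le_map_sum hw0 hw1 hmem
      simp only [smul_eq_mul] at hjensen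
      have hsum : ∑ k, w k * a k =
          gcheck Kker h c pw θ1 φ x / gcheck Kker h c pw θ0 φ x := by
        have hterm : ∀ k, w k * a k =
            pw k * Ofun Kker h c θ1 φ k x / gcheck Kker h c pw θ0 φ x := by
          intro k
          have hc0 : c k (fun j => cdf (φ k j) (x j)) (θ0 k) ≠ 0 := (hcpos _ _ _).ne'
          rw [hw, ha]
          unfold wgt Ofun
          rw [div_mul_div_comm,
            div_eq_div_iff (mul_ne_zero (hG θ0 x).ne' hc0) (hG θ0 x).ne']
          ring
        simp only [hterm]
        rw [← Finset.sum_div]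
        rfl
      rw [hsum] at hjensen
      exact hjensen
  -- integrate the pointwise inequality
  have hint : (∫ x, g x * ∑ k, wgt Kker h c pw θ0 φ k x *
        Real.log (c k (fun j => cdf (φ k j) (x j)) (θ1 k) /
          c k (fun j => cdf (φ k j) (x j)) (θ0 k))) ≤ ∫ x, F x :=
    integral_mono (hpsi3 θ0 θ1) hFint hpt
  have hneg : -Psi3 g Kker h c pw θ0 φ θ1 φ =
      ∫ x, g x * ∑ k, wgt Kker h c pw θ0 φ k x *
        Real.log (c k (fun j => cdf (φ k j) (x j)) (θ1 k) /
          c k (fun j => cdf (φ k j) (x j)) (θ0 k)) := by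
    unfold Psi3
    rw [neg_neg]
  rw [hneg] at hA
  rw [hFeq] at hint
  linarith
end
end
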